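/- arXiv:2509.04612 — 8 statements merged into one kernel-verified Lean document; each statement's English description precedes it below -/
import Mathlib

section
/- Let γ: ℝ → ℝ be a continuous T-periodic function and let φ be a T-periodic solution of x' = x² + γ(t) with ∫₀ᵀ φ(t) dt = 0. Then φ is the unique T-periodic solution of x' = x² + γ(t): any T-periodic solution ψ of this equation satisfies ψ = φ. -/
/-!
If ψ ≠ φ somewhere, then u = ψ - φ solves the linear equation u' = (ψ + φ) u, so it never vanishes,
and v = 1/u solves v' = -2φ v - 1. With the integrating factor e^{-A}, A = ∫₀ᵗ (-2φ), this reads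
(e^{-A} v)' = -e^{-A} < 0. Since ∫₀ᵀ φ = 0 the factor is 1 at both ends of [0, T], so v(T) < v(0),
contradicting the periodicity of v.
-/

open intervalIntegral

theorem mul_exp_neg_integral_eq {g u : ℝ → ℝ} (hg : Continuous g)
    (hu : ∀ t, HasDerivAt u (g t * u t) t) (t₀ t : ℝ) :
    u t * Real.exp (-∫ s in t₀..t, g s) = u t₀ := by
  have hw : ∀ s, HasDerivAt (fun r => u r * Real.exp (-∫ x in t₀..r, g x)) 0 s := fun s =>
    ((hu s).mul (hg.integral_hasStrictDerivAt t₀ s).hasDerivAt.neg.exp).congr_deriv (by ring)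
  simpa using is_const_of_deriv_eq_zero (fun s => (hw s).differentiableAt)
    (fun s => (hw s).deriv) t t₀

theorem ne_zero_of_forall_hasDerivAt_mul {g u : ℝ → ℝ} (hg : Continuous g)
    (hu : ∀ t, HasDerivAt u (g t * u t) t) {t₀ : ℝ} (h₀ : u t₀ ≠ 0) (t : ℝ) : u t ≠ 0 := by
  intro ht
  have := mul_exp_neg_integral_eq hg hu t₀ t
  rw [ht, zero_mul] at this
  exact h₀ this.symm

theorem lt_of_hasDerivAt_mul_sub_one {a v : ℝ → ℝ} (ha : Continuous a)
    (hv : ∀ t, HasDerivAt v (a t * v t - 1) t) {T : ℝ} (hT : 0 < T)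
    (ha₀ : ∫ t in (0 : ℝ)..T, a t = 0) : v T < v 0 := by
  set A : ℝ → ℝ := fun t => ∫ s in (0 : ℝ)..t, a s
  have hA : ∀ t, HasDerivAt A (a t) t := fun t => (ha.integral_hasStrictDerivAt 0 t).hasDerivAt
  have hAc : Continuous A := continuous_iff_continuousAt.2 fun t => (hA t).continuousAt
  have hE : Continuous fun t => Real.exp (-A t) := by fun_prop
  have hw : ∀ t, HasDerivAt (fun r => Real.exp (-A r) * v r) (-Real.exp (-A t)) t := fun t =>
    (((hA t).neg.exp).mul (hv t)).congr_deriv (by simp only [Pi.neg_apply]; ring)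
  have hint := integral_eq_sub_of_hasDerivAt (fun t _ => hw t) (hE.neg.intervalIntegrable 0 T)
  have hpos : 0 < ∫ t in (0 : ℝ)..T, Real.exp (-A t) :=
    intervalIntegral_pos_of_pos_on (hE.intervalIntegrable 0 T) (fun t _ => Real.exp_pos _) hT
  have hAT : A T = 0 := ha₀
  simp only [integral_neg, hAT, A, integral_same, neg_zero, Real.exp_zero, one_mul] at hint
  linarith

theorem hasDerivAt_inv_sub_of_riccati {γ φ ψ : ℝ → ℝ} {t : ℝ}
    (hφ : HasDerivAt φ (φ t ^ 2 + γ t) t) (hψ : HasDerivAt ψ (ψ t ^ 2 + γ t) t)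
    (hne : ψ t - φ t ≠ 0) :
    HasDerivAt (fun r => (ψ r - φ r)⁻¹) (-2 * φ t * (ψ t - φ t)⁻¹ - 1) t := by
  refine ((hψ.sub hφ).inv hne).congr_deriv ?_
  simp only [Pi.sub_apply]
  field_simp
  ring

theorem stmt_2_general (T : ℝ) (hT : 0 < T) (γ : ℝ → ℝ)
    (φ : ℝ → ℝ) (hφd : ∀ t, HasDerivAt φ (φ t ^ 2 + γ t) t)
    (hφp : Function.Periodic φ T)
    (hφ0 : (∫ t in (0:ℝ)..T, φ t) = 0)
    (ψ : ℝ → ℝ) (hψd : ∀ t, HasDerivAt ψ (ψ t ^ 2 + γ t) t)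
    (hψp : Function.Periodic ψ T) :
    ψ = φ := by
  by_contra hne
  obtain ⟨t₀, ht₀⟩ := Function.ne_iff.1 hne
  have hφc : Continuous φ := continuous_iff_continuousAt.2 fun t => (hφd t).continuousAt
  have hψc : Continuous ψ := continuous_iff_continuousAt.2 fun t => (hψd t).continuousAt
  have hu : ∀ t, HasDerivAt (fun r => ψ r - φ r) ((ψ t + φ t) * (ψ t - φ t)) t := fun t =>
    ((hψd t).sub (hφd t)).congr_deriv (by ring)
  have hu₀ := ne_zero_of_forall_hasDerivAt_mul (hψc.add hφc) hu (sub_ne_zero.2 ht₀)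
  have hdecr := lt_of_hasDerivAt_mul_sub_one (a := fun t => -2 * φ t) (continuous_const.mul hφc)
    (fun t => hasDerivAt_inv_sub_of_riccati (hφd t) (hψd t) (hu₀ t)) hT
    (by rw [integral_const_mul, hφ0, mul_zero])
  rw [hψp.eq, hφp.eq] at hdecr
  exact lt_irrefl _ hdecr

theorem stmt_2 (T : ℝ) (hT : 0 < T) (γ : ℝ → ℝ) (hγc : Continuous γ)
    (hγp : Function.Periodic γ T)
    (φ : ℝ → ℝ) (hφd : ∀ t, HasDerivAt φ (φ t ^ 2 + γ t) t)
    (hφp : Function.Periodic φ T)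
    (hφ0 : (∫ t in (0:ℝ)..T, φ t) = 0)
    (ψ : ℝ → ℝ) (hψd : ∀ t, HasDerivAt ψ (ψ t ^ 2 + γ t) t)
    (hψp : Function.Periodic ψ T) :
    ψ = φ :=
  stmt_2_general T hT γ φ hφd hφp hφ0 ψ hψd hψp
end

section
/- Let γ: ℝ → ℝ be a continuous T-periodic function. If φ and ψ are two distinct T-periodic solutions of x' = x² + γ(t), then both have nonzero average: ∫₀ᵀ φ(t) dt ≠ 0 and ∫₀ᵀ ψ(t) dt ≠ 0. Conversely, if the equation has a T-periodic solution with nonzero average, then it has exactly two distinct T-periodic solutions. -/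
/-!
If `φ` is a periodic solution of `x' = x² + γ`, any other solution `χ` never meets `φ` (the
difference solves a linear homogeneous equation), so `w = 1 / (χ - φ)` is a solution of the linear
equation `w' = -1 - 2φ w`. Multiplying by the integrating factor `E = exp (∫₀ᵗ 2φ)` gives
`E w = w(0) - ∫₀ᵗ E`, so a `T`-periodic `w` must satisfy `(E(T) - 1) w(0) = -∫₀ᵀ E ≠ 0`.
Hence `E(T) ≠ 1`, i.e. `φ` has nonzero average, and then `w(0)`, hence `χ`, is unique.
Conversely, when `E(T) ≠ 1` this value of `w(0)` gives a periodic `w`, and `w` has no zero because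
`w(0) - ∫₀ᵗ E` is strictly decreasing and gets multiplied by `E(T)` over one period.
-/

open MeasureTheory intervalIntegral Function

noncomputable def integratingFactor (a : ℝ → ℝ) (t : ℝ) : ℝ := Real.exp (∫ s in (0:ℝ)..t, a s)

section IntegratingFactor

variable {a : ℝ → ℝ} {T : ℝ}

lemma integratingFactor_pos (a : ℝ → ℝ) (t : ℝ) : 0 < integratingFactor a t := Real.exp_pos _

@[simp]
lemma integratingFactor_zero : integratingFactor a 0 = 1 := by simp [integratingFactor]

lemma hasDerivAt_integratingFactor (ha : Continuous a) (t : ℝ) :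
    HasDerivAt (integratingFactor a) (integratingFactor a t * a t) t :=
  (ha.integral_hasStrictDerivAt 0 t).hasDerivAt.exp

lemma continuous_integratingFactor (ha : Continuous a) : Continuous (integratingFactor a) :=
  continuous_iff_continuousAt.2 fun t => (hasDerivAt_integratingFactor ha t).continuousAt

lemma integratingFactor_eq_one_iff : integratingFactor a T = 1 ↔ ∫ t in (0:ℝ)..T, a t = 0 :=
  Real.exp_eq_one_iff _

lemma integratingFactor_add_period (ha : Continuous a) (hap : Periodic a T) (t : ℝ) :
    integratingFactor a (t + T) = integratingFactor a T * integratingFactor a t := by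
  rw [integratingFactor, integratingFactor, integratingFactor, ← Real.exp_add,
    hap.intervalIntegral_add_eq_add 0 t fun _ _ => ha.intervalIntegrable _ _, zero_add, add_comm]

lemma integral_integratingFactor_add_period (ha : Continuous a) (hap : Periodic a T) (t : ℝ) :
    ∫ s in (0:ℝ)..t + T, integratingFactor a s =
      (∫ s in (0:ℝ)..T, integratingFactor a s) +
        integratingFactor a T * ∫ s in (0:ℝ)..t, integratingFactor a s := by
  have hE := (continuous_integratingFactor ha).intervalIntegrable (μ := volume)
  rw [← integral_add_adjacent_intervals (hE 0 T) (hE T (t + T)),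
    ← intervalIntegral.integral_const_mul]
  congr 1
  simpa [integratingFactor_add_period ha hap] using
    (integral_comp_add_right (a := 0) (b := t) (integratingFactor a) T).symm

lemma strictMono_integral_integratingFactor (ha : Continuous a) :
    StrictMono fun t => ∫ s in (0:ℝ)..t, integratingFactor a s :=
  strictMono_of_deriv_pos fun t =>
    ((continuous_integratingFactor ha).deriv_integral _ 0 t).symm ▸ integratingFactor_pos a t

lemma integral_integratingFactor_ne_zero (ha : Continuous a) (hT : T ≠ 0) :
    ∫ t in (0:ℝ)..T, integratingFactor a t ≠ 0 := by
  simpa using (strictMono_integral_integratingFactor ha).injective.ne hT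

lemma integratingFactor_mul_eq_of_hasDerivAt {b w : ℝ → ℝ} (ha : Continuous a)
    (hb : Continuous b) (hw : ∀ t, HasDerivAt w (b t - a t * w t) t) (t : ℝ) :
    integratingFactor a t * w t = w 0 + ∫ s in (0:ℝ)..t, integratingFactor a s * b s := by
  have hF : ∀ s, HasDerivAt (fun s => integratingFactor a s * w s)
      (integratingFactor a s * b s) s := fun s =>
    ((hasDerivAt_integratingFactor ha s).mul (hw s)).congr_deriv (by ring)
  rw [integral_eq_sub_of_hasDerivAt (fun s _ => hF s)
    (((continuous_integratingFactor ha).mul hb).intervalIntegrable 0 t)]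
  simp

lemma integratingFactor_sub_one_mul_eq_of_periodic {b w : ℝ → ℝ} (ha : Continuous a)
    (hb : Continuous b) (hw : ∀ t, HasDerivAt w (b t - a t * w t) t) (hwp : Periodic w T) :
    (integratingFactor a T - 1) * w 0 = ∫ t in (0:ℝ)..T, integratingFactor a t * b t := by
  have hwT : w T = w 0 := by simpa using hwp 0
  have := integratingFactor_mul_eq_of_hasDerivAt ha hb hw T
  rw [hwT] at this
  linarith

lemma exists_periodic_ne_zero_hasDerivAt (ha : Continuous a) (hap : Periodic a T)
    (hint : ∫ t in (0:ℝ)..T, a t ≠ 0) :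
    ∃ w : ℝ → ℝ, Periodic w T ∧ (∀ t, w t ≠ 0) ∧ ∀ t, HasDerivAt w (-1 - a t * w t) t := by
  set G : ℝ → ℝ := fun t => ∫ s in (0:ℝ)..t, integratingFactor a s
  have hET : 1 - integratingFactor a T ≠ 0 :=
    sub_ne_zero.2 (Ne.symm (integratingFactor_eq_one_iff.not.2 hint))
  set c := G T / (1 - integratingFactor a T)
  have hc : c * (1 - integratingFactor a T) = G T := div_mul_cancel₀ _ hET
  have hG : ∀ t, HasDerivAt G (integratingFactor a t) t := fun t =>
    ((continuous_integratingFactor ha).integral_hasStrictDerivAt 0 t).hasDerivAt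
  have hshift : ∀ t, c - G (t + T) = integratingFactor a T * (c - G t) := fun t => by
    simp only [G, integral_integratingFactor_add_period ha hap]
    linear_combination hc
  have hT : T ≠ 0 := by
    rintro rfl
    simp at hint
  have hzero : ∀ t, c - G t ≠ 0 := fun t ht => by
    have hperiod : G (t + T) = G t := by
      have h := hshift t
      rw [ht, mul_zero] at h
      linarith
    exact hT (by simpa using (strictMono_integral_integratingFactor ha).injective hperiod)
  refine ⟨fun t => (c - G t) / integratingFactor a t, fun t => ?_,
    fun t => div_ne_zero (hzero t) (integratingFactor_pos a t).ne', fun t => ?_⟩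
  · simp only
    rw [hshift, integratingFactor_add_period ha hap,
      mul_div_mul_left _ _ (integratingFactor_pos a T).ne']
  · exact (((hG t).const_sub c).div (hasDerivAt_integratingFactor ha t)
      (integratingFactor_pos a t).ne').congr_deriv (by
        field_simp [(integratingFactor_pos a t).ne'])

end IntegratingFactor

def IsRiccatiSolution (γ φ : ℝ → ℝ) : Prop := ∀ t, HasDerivAt φ (φ t ^ 2 + γ t) t

namespace IsRiccatiSolution

variable {γ φ ψ χ χ₁ χ₂ : ℝ → ℝ} {T : ℝ}

lemma continuous (hφ : IsRiccatiSolution γ φ) : Continuous φ :=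
  continuous_iff_continuousAt.2 fun t => (hφ t).continuousAt

lemma eq_of_apply_eq (hφ : IsRiccatiSolution γ φ) (hψ : IsRiccatiSolution γ ψ) {t₀ : ℝ}
    (h : φ t₀ = ψ t₀) : φ = ψ := by
  -- `(φ - ψ)' = (φ + ψ) (φ - ψ)`, written as `b - a (φ - ψ)` with `b = 0`
  have hd : ∀ t, HasDerivAt (fun s => φ s - ψ s) (0 - (-(φ t + ψ t)) * (φ t - ψ t)) t :=
    fun t => ((hφ t).sub (hψ t)).congr_deriv (by ring)
  have key := integratingFactor_mul_eq_of_hasDerivAt (a := fun t => -(φ t + ψ t))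
    (b := fun _ => 0) (hφ.continuous.add hψ.continuous).neg continuous_const hd
  simp only [mul_zero, intervalIntegral.integral_zero, add_zero] at key
  have h0 : φ 0 - ψ 0 = 0 := by rw [← key t₀, h, sub_self, mul_zero]
  funext t
  exact sub_eq_zero.1 ((mul_eq_zero.1 ((key t).trans h0)).resolve_left
    (integratingFactor_pos _ _).ne')

lemma hasDerivAt_inv_sub (hφ : IsRiccatiSolution γ φ) (hχ : IsRiccatiSolution γ χ) {t : ℝ}
    (hne : χ t ≠ φ t) :
    HasDerivAt (fun s => (χ s - φ s)⁻¹) (-1 - 2 * φ t * (χ t - φ t)⁻¹) t :=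
  (((hχ t).sub (hφ t)).inv (sub_ne_zero.2 hne)).congr_deriv (by
    simp only [Pi.sub_apply]
    field_simp [sub_ne_zero.2 hne]
    ring)

lemma add_inv (hφ : IsRiccatiSolution γ φ) {w : ℝ → ℝ}
    (hw : ∀ t, HasDerivAt w (-1 - 2 * φ t * w t) t) (hw0 : ∀ t, w t ≠ 0) :
    IsRiccatiSolution γ (fun t => φ t + (w t)⁻¹) := fun t =>
  ((hφ t).add ((hw t).inv (hw0 t))).congr_deriv (by
    field_simp [hw0 t]
    ring)

lemma integratingFactor_sub_one_mul_inv_sub (hφ : IsRiccatiSolution γ φ) (hφp : Periodic φ T)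
    (hχ : IsRiccatiSolution γ χ) (hχp : Periodic χ T) (hne : χ ≠ φ) :
    (integratingFactor (fun t => 2 * φ t) T - 1) * (χ 0 - φ 0)⁻¹ =
      -∫ t in (0:ℝ)..T, integratingFactor (fun t => 2 * φ t) t := by
  have hne_apply : ∀ t, χ t ≠ φ t := fun t h => hne (hχ.eq_of_apply_eq hφ h)
  have := integratingFactor_sub_one_mul_eq_of_periodic (T := T) (a := fun t => 2 * φ t)
    (b := fun _ => -1) (w := fun t => (χ t - φ t)⁻¹) (continuous_const.mul hφ.continuous)
    continuous_const (fun t => hφ.hasDerivAt_inv_sub hχ (hne_apply t)) (fun t => by simp [hχp t, hφp t])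
  simpa [intervalIntegral.integral_neg] using this

lemma integratingFactor_ne_one (hT : T ≠ 0) (hφ : IsRiccatiSolution γ φ) (hφp : Periodic φ T)
    (hχ : IsRiccatiSolution γ χ) (hχp : Periodic χ T) (hne : χ ≠ φ) :
    integratingFactor (fun t => 2 * φ t) T ≠ 1 := by
  intro hE
  have := integratingFactor_sub_one_mul_inv_sub hφ hφp hχ hχp hne
  rw [hE, sub_self, zero_mul, eq_comm, neg_eq_zero] at this
  exact integral_integratingFactor_ne_zero (continuous_const.mul hφ.continuous) hT this

lemma integral_ne_zero (hT : T ≠ 0) (hφ : IsRiccatiSolution γ φ) (hφp : Periodic φ T)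
    (hχ : IsRiccatiSolution γ χ) (hχp : Periodic χ T) (hne : χ ≠ φ) :
    ∫ t in (0:ℝ)..T, φ t ≠ 0 := fun h0 =>
  integratingFactor_ne_one hT hφ hφp hχ hχp hne <| by
    rw [integratingFactor_eq_one_iff, intervalIntegral.integral_const_mul, h0, mul_zero]

lemma eq_of_ne_of_ne (hT : T ≠ 0) (hφ : IsRiccatiSolution γ φ) (hφp : Periodic φ T)
    (hχ₁ : IsRiccatiSolution γ χ₁) (hχ₁p : Periodic χ₁ T) (hχ₂ : IsRiccatiSolution γ χ₂)
    (hχ₂p : Periodic χ₂ T) (h₁ : χ₁ ≠ φ) (h₂ : χ₂ ≠ φ) : χ₁ = χ₂ := by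
  have hE := sub_ne_zero.2 (integratingFactor_ne_one hT hφ hφp hχ₁ hχ₁p h₁)
  have h0 : (χ₁ 0 - φ 0)⁻¹ = (χ₂ 0 - φ 0)⁻¹ :=
    mul_left_cancel₀ hE ((integratingFactor_sub_one_mul_inv_sub hφ hφp hχ₁ hχ₁p h₁).trans
      (integratingFactor_sub_one_mul_inv_sub hφ hφp hχ₂ hχ₂p h₂).symm)
  exact hχ₁.eq_of_apply_eq hχ₂ (t₀ := 0) (by simpa using h0)

lemma exists_ne_of_integral_ne_zero (hφ : IsRiccatiSolution γ φ) (hφp : Periodic φ T)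
    (hint : ∫ t in (0:ℝ)..T, φ t ≠ 0) :
    ∃ ψ, IsRiccatiSolution γ ψ ∧ Periodic ψ T ∧ ψ ≠ φ := by
  obtain ⟨w, hwp, hw0, hw⟩ := exists_periodic_ne_zero_hasDerivAt (T := T)
    (a := fun t => 2 * φ t) (continuous_const.mul hφ.continuous) (fun t => by simp [hφp t])
    (by simpa [intervalIntegral.integral_const_mul] using hint)
  refine ⟨_, hφ.add_inv hw hw0, fun t => by simp [hφp t, hwp t], fun h => hw0 0 ?_⟩
  simpa using congrFun h 0

end IsRiccatiSolution

theorem stmt_3_general (T : ℝ) (hT : 0 < T) (γ : ℝ → ℝ) :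
    -- two distinct periodic solutions have nonzero average
    (∀ φ ψ : ℝ → ℝ, (∀ t, HasDerivAt φ (φ t ^ 2 + γ t) t) → Function.Periodic φ T →
      (∀ t, HasDerivAt ψ (ψ t ^ 2 + γ t) t) → Function.Periodic ψ T → φ ≠ ψ →
      (∫ t in (0:ℝ)..T, φ t) ≠ 0 ∧ (∫ t in (0:ℝ)..T, ψ t) ≠ 0) ∧
    -- a periodic solution with nonzero average implies exactly two periodic solutions
    (∀ φ : ℝ → ℝ, (∀ t, HasDerivAt φ (φ t ^ 2 + γ t) t) → Function.Periodic φ T →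
      (∫ t in (0:ℝ)..T, φ t) ≠ 0 →
      ∃ φ₁ φ₂ : ℝ → ℝ, φ₁ ≠ φ₂ ∧
        (∀ t, HasDerivAt φ₁ (φ₁ t ^ 2 + γ t) t) ∧ Function.Periodic φ₁ T ∧
        (∀ t, HasDerivAt φ₂ (φ₂ t ^ 2 + γ t) t) ∧ Function.Periodic φ₂ T ∧
        ∀ χ : ℝ → ℝ, (∀ t, HasDerivAt χ (χ t ^ 2 + γ t) t) → Function.Periodic χ T →
          χ = φ₁ ∨ χ = φ₂) := by
  refine ⟨fun φ ψ hφ hφp hψ hψp hne => ?_, fun φ hφ hφp hint => ?_⟩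
  · exact ⟨IsRiccatiSolution.integral_ne_zero hT.ne' hφ hφp hψ hψp hne.symm,
      IsRiccatiSolution.integral_ne_zero hT.ne' hψ hψp hφ hφp hne⟩
  · obtain ⟨ψ, hψ, hψp, hne⟩ := IsRiccatiSolution.exists_ne_of_integral_ne_zero hφ hφp hint
    refine ⟨φ, ψ, hne.symm, hφ, hφp, hψ, hψp, fun χ hχ hχp => ?_⟩
    by_cases hχφ : χ = φ
    · exact Or.inl hχφ
    · exact Or.inr (IsRiccatiSolution.eq_of_ne_of_ne hT.ne' hφ hφp hχ hχp hψ hψp hχφ hne)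

theorem stmt_3 (T : ℝ) (hT : 0 < T) (γ : ℝ → ℝ) (hγc : Continuous γ)
    (hγp : Function.Periodic γ T) :
    -- two distinct periodic solutions have nonzero average
    (∀ φ ψ : ℝ → ℝ, (∀ t, HasDerivAt φ (φ t ^ 2 + γ t) t) → Function.Periodic φ T →
      (∀ t, HasDerivAt ψ (ψ t ^ 2 + γ t) t) → Function.Periodic ψ T → φ ≠ ψ →
      (∫ t in (0:ℝ)..T, φ t) ≠ 0 ∧ (∫ t in (0:ℝ)..T, ψ t) ≠ 0) ∧
    -- a periodic solution with nonzero average implies exactly two periodic solutions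
    (∀ φ : ℝ → ℝ, (∀ t, HasDerivAt φ (φ t ^ 2 + γ t) t) → Function.Periodic φ T →
      (∫ t in (0:ℝ)..T, φ t) ≠ 0 →
      ∃ φ₁ φ₂ : ℝ → ℝ, φ₁ ≠ φ₂ ∧
        (∀ t, HasDerivAt φ₁ (φ₁ t ^ 2 + γ t) t) ∧ Function.Periodic φ₁ T ∧
        (∀ t, HasDerivAt φ₂ (φ₂ t ^ 2 + γ t) t) ∧ Function.Periodic φ₂ T ∧
        ∀ χ : ℝ → ℝ, (∀ t, HasDerivAt χ (χ t ^ 2 + γ t) t) → Function.Periodic χ T →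
          χ = φ₁ ∨ χ = φ₂) :=
  stmt_3_general T hT γ
end

section
/- Let γ: ℝ → ℝ be a continuous T-periodic function. If γ̄ > 0, or if γ̄ = 0 and γ is not identically zero, then the equation x' = x² + γ(t) has no T-periodic solutions. -/
/-! Integrating `φ' = φ² + γ` over one period gives `0 = φ T - φ 0 = ∫ φ² + ∫ γ`, so `∫ γ ≤ 0`.
If `∫ γ = 0` then `∫ φ² = 0`, so the continuous `φ` vanishes on `[0, T]`, hence everywhere by
periodicity, and then `γ = φ' - φ² = 0`. -/

open MeasureTheory Set

namespace Function.Periodic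

theorem intervalIntegral_deriv_eq_zero {E : Type*} [NormedAddCommGroup E] [NormedSpace ℝ E]
    [CompleteSpace E] {f f' : ℝ → E} {T : ℝ} (hf : Periodic f T)
    (hderiv : ∀ t, HasDerivAt f (f' t) t)
    (hint : IntervalIntegrable f' volume 0 T) : ∫ t in (0 : ℝ)..T, f' t = 0 := by
  rw [intervalIntegral.integral_eq_sub_of_hasDerivAt (fun t _ => hderiv t) hint, sub_eq_zero]
  simpa using hf 0

theorem eq_zero_of_eqOn_Ioc {α β : Type*} [AddCommGroup α] [LinearOrder α] [IsOrderedAddMonoid α]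
    [Archimedean α] [Zero β] {f : α → β} {T : α} (hf : Periodic f T) (hT : 0 < T)
    (h : EqOn f 0 (Ioc 0 T)) : f = 0 := by
  funext x
  obtain ⟨y, hy, hxy⟩ := hf.exists_mem_Ioc hT x 0
  rw [hxy]
  exact h (by simpa using hy)

end Function.Periodic

section Riccati

variable {T : ℝ} {γ φ : ℝ → ℝ}

theorem riccati_integral_sq_add_integral_eq_zero (hγ : Continuous γ)
    (hφ : ∀ t, HasDerivAt φ (φ t ^ 2 + γ t) t) (hper : Function.Periodic φ T) :
    (∫ t in (0 : ℝ)..T, φ t ^ 2) + ∫ t in (0 : ℝ)..T, γ t = 0 := by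
  have hφc : Continuous φ := continuous_iff_continuousAt.mpr fun t => (hφ t).continuousAt
  rw [← intervalIntegral.integral_add (f := fun t => φ t ^ 2) ((hφc.pow 2).intervalIntegrable 0 T)
    (hγ.intervalIntegrable 0 T)]
  exact hper.intervalIntegral_deriv_eq_zero hφ (((hφc.pow 2).add hγ).intervalIntegrable 0 T)

theorem riccati_integral_nonpos (hT : 0 ≤ T) (hγ : Continuous γ)
    (hφ : ∀ t, HasDerivAt φ (φ t ^ 2 + γ t) t) (hper : Function.Periodic φ T) :
    ∫ t in (0 : ℝ)..T, γ t ≤ 0 := by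
  have hsq : 0 ≤ ∫ t in (0 : ℝ)..T, φ t ^ 2 :=
    intervalIntegral.integral_nonneg hT fun t _ => sq_nonneg (φ t)
  linarith [riccati_integral_sq_add_integral_eq_zero hγ hφ hper]

theorem riccati_eq_zero_of_integral_eq_zero (hT : 0 < T) (hγ : Continuous γ)
    (hφ : ∀ t, HasDerivAt φ (φ t ^ 2 + γ t) t) (hper : Function.Periodic φ T)
    (hγ0 : ∫ t in (0 : ℝ)..T, γ t = 0) : γ = 0 := by
  have hφc : Continuous φ := continuous_iff_continuousAt.mpr fun t => (hφ t).continuousAt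
  have hsq : ∫ t in (0 : ℝ)..T, φ t ^ 2 = 0 := by
    linarith [riccati_integral_sq_add_integral_eq_zero hγ hφ hper]
  have hφ_Icc : EqOn φ 0 (Icc 0 T) := by
    intro t ht
    by_contra hne
    have hpos : 0 < ∫ s in (0 : ℝ)..T, φ s ^ 2 :=
      intervalIntegral.integral_pos hT (hφc.pow 2).continuousOn (fun s _ => sq_nonneg (φ s))
        ⟨t, ht, sq_pos_of_ne_zero hne⟩
    exact hpos.ne' hsq
  have hφ0 : φ = 0 := hper.eq_zero_of_eqOn_Ioc hT (hφ_Icc.mono Ioc_subset_Icc_self)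
  subst hφ0
  funext t
  simpa using (hφ t).unique (hasDerivAt_const t (0 : ℝ))

end Riccati

theorem stmt_5_general (T : ℝ) (hT : 0 < T) (γ : ℝ → ℝ) (hγc : Continuous γ)
    (h : 0 < (1 / T) * (∫ t in (0:ℝ)..T, γ t) ∨
      ((1 / T) * (∫ t in (0:ℝ)..T, γ t) = 0 ∧ ∃ t, γ t ≠ 0)) :
    ¬ ∃ φ : ℝ → ℝ, (∀ t, HasDerivAt φ (φ t ^ 2 + γ t) t) ∧ Function.Periodic φ T := by
  rintro ⟨φ, hφ, hper⟩
  have hnonpos := riccati_integral_nonpos hT.le hγc hφ hper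
  rcases h with hpos | ⟨hmean, t, ht⟩
  · have : (1 / T) * (∫ t in (0:ℝ)..T, γ t) ≤ 0 :=
      mul_nonpos_of_nonneg_of_nonpos (by positivity) hnonpos
    linarith
  · have hint : ∫ t in (0:ℝ)..T, γ t = 0 :=
      (mul_eq_zero.mp hmean).resolve_left (by positivity)
    exact ht (congrFun (riccati_eq_zero_of_integral_eq_zero hT hγc hφ hper hint) t)

theorem stmt_5 (T : ℝ) (hT : 0 < T) (γ : ℝ → ℝ) (hγc : Continuous γ)
    (hγp : Function.Periodic γ T)
    (h : 0 < (1 / T) * (∫ t in (0:ℝ)..T, γ t) ∨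
      ((1 / T) * (∫ t in (0:ℝ)..T, γ t) = 0 ∧ ∃ t, γ t ≠ 0)) :
    ¬ ∃ φ : ℝ → ℝ, (∀ t, HasDerivAt φ (φ t ^ 2 + γ t) t) ∧ Function.Periodic φ T :=
  stmt_5_general T hT γ hγc h
end

section
/- Let γ: ℝ → ℝ be a continuous T-periodic function. If there exists p ∈ C¹_T(ℝ) such that p'(t) ≥ p(t)² + γ(t) for all t ∈ ℝ, then the equation x' = x² + γ(t) has at least one T-periodic solution. -/
/-!
Take bounds `|γ| ≤ M` and `|p| ≤ B`. The constant `c = -(M + B + 1)` satisfies `0 ≤ c² + γ`, so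
it is a lower solution lying below the upper solution `p`. Truncating `x²` outside `[c, B]` gives
a globally Lipschitz, bounded equation, whose solutions exist on `[0, T]` and, by comparison,
stay between `c` and `p` when they start in `[c, p 0]`. Since `c` and `p` are `T`-periodic, the
Poincaré map `x₀ ↦ x(T; x₀)` sends `[c, p 0]` into itself, so it has a fixed point by the
intermediate value theorem. Along that solution the truncation is inactive, and its
`T`-periodic extension solves `x' = x² + γ(t)` on all of `ℝ`.
-/

open Set Function Real
open scoped NNReal

def IsLowerSolutionOn (α : ℝ → ℝ) (v : ℝ → ℝ → ℝ) (s : Set ℝ) : Prop :=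
  ∀ t ∈ s, ∃ d ≤ v t (α t), HasDerivWithinAt α d s t

def IsUpperSolutionOn (β : ℝ → ℝ) (v : ℝ → ℝ → ℝ) (s : Set ℝ) : Prop :=
  ∀ t ∈ s, ∃ d ≥ v t (β t), HasDerivWithinAt β d s t

theorem IsIntegralCurveOn.isLowerSolutionOn {v : ℝ → ℝ → ℝ} {x : ℝ → ℝ} {s : Set ℝ}
    (h : IsIntegralCurveOn x v s) : IsLowerSolutionOn x v s :=
  fun t ht => ⟨_, le_rfl, h t ht⟩

theorem IsIntegralCurveOn.isUpperSolutionOn {v : ℝ → ℝ → ℝ} {x : ℝ → ℝ} {s : Set ℝ}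
    (h : IsIntegralCurveOn x v s) : IsUpperSolutionOn x v s :=
  fun t ht => ⟨_, le_rfl, h t ht⟩

section ODE

variable {E : Type*} [NormedAddCommGroup E] [NormedSpace ℝ E] {v : ℝ → E → E} {K : ℝ≥0}
  {a b : ℝ}

theorem HasDerivWithinAt.mono_Ici_of_mem_Ico {f : ℝ → E} {f' : E} {t : ℝ}
    (h : HasDerivWithinAt f f' (Icc a b) t) (ht : t ∈ Ico a b) :
    HasDerivWithinAt f f' (Ici t) t :=
  h.mono_of_mem_nhdsWithin (Icc_mem_nhdsGE_of_mem ht)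

theorem exists_isIntegralCurveOn_Icc [CompleteSpace E] {C : ℝ} (hab : a ≤ b)
    (hv : ∀ t, LipschitzWith K (v t)) (hcont : ∀ x, Continuous (v · x))
    (hbd : ∀ t x, ‖v t x‖ ≤ C) (x₀ : E) :
    ∃ f : ℝ → E, f a = x₀ ∧ IsIntegralCurveOn f v (Icc a b) := by
  have hC : 0 ≤ C := (norm_nonneg _).trans (hbd a x₀)
  -- a field bounded by `C` cannot leave the ball of radius `C * (b - a)` in time `b - a`
  exact IsPicardLindelof.exists_eq_forall_mem_Icc_hasDerivWithinAt₀ (t₀ := ⟨a, le_rfl, hab⟩)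
    (a := ⟨C * (b - a), by have := sub_nonneg.2 hab; positivity⟩) (L := ⟨C, hC⟩)
    { lipschitzOnWith := fun t _ => (hv t).lipschitzOnWith
      continuousOn := fun x _ => (hcont x).continuousOn
      norm_le := fun t _ x _ => hbd t x
      mul_max_le := by
        simp only [sub_self, max_eq_left (sub_nonneg.2 hab), NNReal.coe_zero, sub_zero]
        rfl }

theorem continuous_apply_of_isIntegralCurveOn_Icc {sol : E → ℝ → E}
    (hv : ∀ t, LipschitzWith K (v t)) (hsol : ∀ x, IsIntegralCurveOn (sol x) v (Icc a b))
    (hsol_a : ∀ x, sol x a = x) {t : ℝ} (ht : t ∈ Icc a b) : Continuous fun x => sol x t := by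
  have right (x : E) (s : ℝ) (hs : s ∈ Ico a b) :=
    (hsol x s (Ico_subset_Icc_self hs)).mono_Ici_of_mem_Ico hs
  refine (LipschitzWith.of_dist_le_mul (K := ⟨exp (K * (t - a)), (exp_pos _).le⟩)
    fun x y => ?_).continuous
  change _ ≤ exp (K * (t - a)) * _
  rw [mul_comm]
  exact dist_le_of_trajectories_ODE hv (fun s hs => (hsol x s hs).continuousWithinAt) (right x)
    (fun s hs => (hsol y s hs).continuousWithinAt) (right y) (by rw [hsol_a, hsol_a]) t ht

end ODE

section LowerUpper

variable {v : ℝ → ℝ → ℝ} {K : ℝ≥0} {C a b : ℝ} {α β : ℝ → ℝ}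

theorem IsLowerSolutionOn.le_of_isUpperSolutionOn (hv : ∀ t, LipschitzWith K (v t))
    (hα : IsLowerSolutionOn α v (Icc a b)) (hβ : IsUpperSolutionOn β v (Icc a b))
    (ha : α a ≤ β a) : ∀ t ∈ Icc a b, α t ≤ β t := by
  choose! α' hα'v hα' using hα
  choose! β' hβ'v hβ' using hβ
  have hexp (t : ℝ) : HasDerivAt (fun s => exp ((K + 1) * (s - a)))
      (exp ((K + 1) * (t - a)) * (K + 1)) t := by
    simpa using (((hasDerivAt_id t).sub_const a).const_mul ((K : ℝ) + 1)).exp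
  -- At a contact point with `β + ε e^{(K+1)(t-a)}` the Lipschitz bound gives
  -- `α' ≤ β' + K ε e^{(K+1)(t-a)}`, strictly below the derivative of the fence.
  have fence (ε : ℝ) (hε : 0 < ε) :
      ∀ t ∈ Icc a b, α t ≤ β t + ε * exp ((K + 1) * (t - a)) := by
    refine image_le_of_deriv_right_lt_deriv_boundary' (fun t ht => (hα' t ht).continuousWithinAt)
      (fun t ht => (hα' t (Ico_subset_Icc_self ht)).mono_Ici_of_mem_Ico ht)
      (by simpa using ha.trans (le_add_of_nonneg_right hε.le))
      (ContinuousOn.add (fun t ht => (hβ' t ht).continuousWithinAt) (by fun_prop))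
      (fun t ht => ((hβ' t (Ico_subset_Icc_self ht)).mono_Ici_of_mem_Ico ht).add
        ((hexp t).const_mul ε).hasDerivWithinAt)
      fun t ht hαβ => ?_
    have hpos : 0 < ε * exp ((K + 1) * (t - a)) := by positivity
    have hlip := (hv t).dist_le_mul (α t) (β t)
    rw [Real.dist_eq, Real.dist_eq, hαβ, add_sub_cancel_left, abs_of_pos hpos] at hlip
    have hαv := hα'v t (Ico_subset_Icc_self ht)
    rw [hαβ] at hαv
    nlinarith [hβ'v t (Ico_subset_Icc_self ht), (abs_le.1 hlip).2]
  intro t ht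
  refine le_of_forall_pos_le_add fun δ hδ => ?_
  simpa [div_mul_cancel₀ _ (exp_pos _).ne'] using
    fence (δ / exp ((K + 1) * (t - a))) (by positivity) t ht

theorem exists_isIntegralCurveOn_Icc_eq_of_lower_upper_of_lipschitzWith (hab : a ≤ b)
    (hv : ∀ t, LipschitzWith K (v t)) (hcont : ∀ x, Continuous (v · x))
    (hbd : ∀ t x, |v t x| ≤ C) (hα : IsLowerSolutionOn α v (Icc a b))
    (hβ : IsUpperSolutionOn β v (Icc a b)) (hαβ : α a ≤ β a) (hα_ab : α a ≤ α b)
    (hβ_ab : β b ≤ β a) :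
    ∃ x : ℝ → ℝ, IsIntegralCurveOn x v (Icc a b) ∧ x a = x b ∧
      ∀ t ∈ Icc a b, α t ≤ x t ∧ x t ≤ β t := by
  choose sol hsol_a hsol using exists_isIntegralCurveOn_Icc hab hv hcont hbd
  have hα_sol (x₀ : ℝ) (h : α a ≤ x₀) : ∀ t ∈ Icc a b, α t ≤ sol x₀ t :=
    hα.le_of_isUpperSolutionOn hv (hsol x₀).isUpperSolutionOn (by rwa [hsol_a])
  have hsol_β (x₀ : ℝ) (h : x₀ ≤ β a) : ∀ t ∈ Icc a b, sol x₀ t ≤ β t :=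
    (hsol x₀).isLowerSolutionOn.le_of_isUpperSolutionOn hv hβ (by rwa [hsol_a])
  have hb : b ∈ Icc a b := right_mem_Icc.2 hab
  -- the Poincaré map `x₀ ↦ sol x₀ b` maps `[α a, β a]` into itself
  obtain ⟨x₀, hx₀, hfix⟩ : ∃ x₀ ∈ Icc (α a) (β a), sol x₀ b - x₀ = 0 :=
    intermediate_value_Icc' hαβ
      ((continuous_apply_of_isIntegralCurveOn_Icc hv hsol hsol_a hb).sub
        continuous_id).continuousOn
      ⟨by simp only [Pi.sub_apply, id]; linarith [hsol_β (β a) le_rfl b hb],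
        by simp only [Pi.sub_apply, id]; linarith [hα_sol (α a) le_rfl b hb]⟩
  exact ⟨sol x₀, hsol x₀, by rw [hsol_a]; linarith,
    fun t ht => ⟨hα_sol x₀ hx₀.1 t ht, hsol_β x₀ hx₀.2 t ht⟩⟩

theorem exists_isIntegralCurveOn_Icc_eq_of_lower_upper {c d : ℝ} (hab : a ≤ b) (hcd : c ≤ d)
    (hv : ∀ t, LipschitzOnWith K (v t) (Icc c d)) (hcont : ∀ x, Continuous (v · x))
    (hbd : ∀ t, ∀ x ∈ Icc c d, |v t x| ≤ C) (hα : IsLowerSolutionOn α v (Icc a b))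
    (hβ : IsUpperSolutionOn β v (Icc a b)) (hα_mem : ∀ t ∈ Icc a b, α t ∈ Icc c d)
    (hβ_mem : ∀ t ∈ Icc a b, β t ∈ Icc c d) (hαβ : α a ≤ β a) (hα_ab : α a ≤ α b)
    (hβ_ab : β b ≤ β a) :
    ∃ x : ℝ → ℝ, IsIntegralCurveOn x v (Icc a b) ∧ x a = x b ∧
      ∀ t ∈ Icc a b, α t ≤ x t ∧ x t ≤ β t := by
  set w : ℝ → ℝ → ℝ := fun t => IccExtend hcd ((Icc c d).domRestrict (v t))
  have hw (t x : ℝ) (hx : x ∈ Icc c d) : w t x = v t x := IccExtend_of_mem _ _ hx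
  have hαw : IsLowerSolutionOn α w (Icc a b) := fun t ht => by
    rw [hw t _ (hα_mem t ht)]; exact hα t ht
  have hβw : IsUpperSolutionOn β w (Icc a b) := fun t ht => by
    rw [hw t _ (hβ_mem t ht)]; exact hβ t ht
  obtain ⟨x, hx, hxab, hαxβ⟩ := exists_isIntegralCurveOn_Icc_eq_of_lower_upper_of_lipschitzWith
    hab (fun t => (hv t).to_restrict.comp (LipschitzWith.projIcc hcd)) (fun x => hcont _)
    (fun t x => hbd t _ (projIcc c d hcd x).2) hαw hβw hαβ hα_ab hβ_ab
  refine ⟨x, fun t ht => ?_, hxab, hαxβ⟩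
  rw [← hw t _ ⟨(hα_mem t ht).1.trans (hαxβ t ht).1, (hαxβ t ht).2.trans (hβ_mem t ht).2⟩]
  exact hx t ht

end LowerUpper

section Periodic

variable {E : Type*} [NormedAddCommGroup E] [NormedSpace ℝ E] {φ φ' : ℝ → E} {T : ℝ}

theorem Function.Periodic.hasDerivWithinAt_preimage_sub {c : ℝ} {e : E} {s : Set ℝ} {x : ℝ}
    (hφ : Periodic φ c) (h : HasDerivWithinAt φ e s (x - c)) :
    HasDerivWithinAt φ e ((· - c) ⁻¹' s) x := by
  have := h.scomp x ((hasDerivAt_id x).sub_const c).hasDerivWithinAt (mapsTo_preimage _ _)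
  simpa [Function.comp_def, hφ.sub_eq] using this

theorem Function.Periodic.hasDerivAt_of_hasDerivWithinAt_Icc (hT : 0 < T) (hφ : Periodic φ T)
    (hφ' : Periodic φ' T) (h : ∀ t ∈ Icc 0 T, HasDerivWithinAt φ (φ' t) (Icc 0 T) t) (t : ℝ) :
    HasDerivAt φ (φ' t) t := by
  have h₂ (s : ℝ) (hs : s ∈ Icc T (T + T)) : HasDerivWithinAt φ (φ' s) (Icc T (T + T)) s := by
    have := hφ.hasDerivWithinAt_preimage_sub (h (s - T) ⟨by linarith [hs.1], by linarith [hs.2]⟩)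
    rwa [hφ'.sub_eq, preimage_sub_const_Icc, zero_add] at this
  have hmid (s : ℝ) (hs : s ∈ Ioo 0 (T + T)) : HasDerivAt φ (φ' s) s := by
    rcases lt_trichotomy s T with hsT | rfl | hsT
    · exact (h s ⟨hs.1.le, hsT.le⟩).hasDerivAt (Icc_mem_nhds hs.1 hsT)
    · have := (h s ⟨hT.le, le_rfl⟩).union (h₂ s ⟨le_rfl, by linarith⟩)
      rw [Icc_union_Icc_eq_Icc hT.le (by linarith)] at this
      exact this.hasDerivAt (Icc_mem_nhds hT (by linarith))
    · exact (h₂ s ⟨hsT.le, hs.2.le⟩).hasDerivAt (Icc_mem_nhds hsT hs.2)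
  -- shift `t` by a multiple of `T` into `[T / 2, 3T / 2) ⊆ (0, 2T)`
  set n := toIcoDiv hT (T / 2) t
  have hs := toIcoMod_mem_Ico hT (T / 2) t
  rw [← self_sub_toIcoDiv_zsmul] at hs
  have := (hmid (t - n • T) ⟨by linarith [hs.1], by linarith [hs.2]⟩).comp_sub_const t (n • T)
  simpa only [hφ.sub_zsmul_eq, hφ'.sub_zsmul_eq] using this

end Periodic

theorem eqOn_comp_toIcoMod {α : Type*} {X : ℝ → α} {T a : ℝ} (hT : 0 < T)
    (hX : X (a + T) = X a) : EqOn (fun t => X (toIcoMod hT a t)) X (Icc a (a + T)) := by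
  intro t ht
  rcases ht.2.lt_or_eq with htT | rfl
  · exact congrArg X ((toIcoMod_eq_self hT).2 ⟨ht.1, htT⟩)
  · simp [toIcoMod_add_right, hX]

theorem exists_riccati_isIntegralCurveOn_Icc_eq {γ p : ℝ → ℝ} {a b M B : ℝ} (hab : a ≤ b)
    (hγc : Continuous γ) (hM : ∀ t, |γ t| ≤ M) (hB : ∀ t, |p t| ≤ B)
    (hp : IsUpperSolutionOn p (fun t x => x ^ 2 + γ t) (Icc a b)) (hp_ab : p b ≤ p a) :
    ∃ X : ℝ → ℝ, IsIntegralCurveOn X (fun t x => x ^ 2 + γ t) (Icc a b) ∧ X a = X b := by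
  have hM0 : 0 ≤ M := (abs_nonneg _).trans (hM 0)
  set c := -(M + B + 1)
  have hp_mem (t : ℝ) : p t ∈ Icc c B :=
    ⟨by linarith [neg_abs_le (p t), hB t], (le_abs_self _).trans (hB t)⟩
  have hcB : c ≤ B := (hp_mem a).1.trans (hp_mem a).2
  have hsq_le (x : ℝ) (hx : x ∈ Icc c B) : x ^ 2 ≤ c ^ 2 := by
    nlinarith [mul_nonneg (sub_nonneg.2 hx.1) (show 0 ≤ -c - x by linarith [hx.2])]
  obtain ⟨K, hK⟩ := (contDiff_id (𝕜 := ℝ) |>.pow 2).locallyLipschitz.locallyLipschitzOn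
    |>.exists_lipschitzOnWith_of_compact (isCompact_Icc (a := c) (b := B))
  obtain ⟨X, hX, hXab, -⟩ := exists_isIntegralCurveOn_Icc_eq_of_lower_upper
    (C := c ^ 2 + M) (α := fun _ => c) hab hcB
    (fun t => LipschitzOnWith.of_dist_le_mul fun x hx y hy => by
      simpa [dist_add_right] using hK.dist_le_mul x hx y hy)
    (fun x => by fun_prop)
    (fun t x hx => (abs_add_le _ _).trans (by rw [abs_sq]; linarith [hM t, hsq_le x hx]))
    (fun t _ => ⟨0, by
      beta_reduce; nlinarith [neg_abs_le (γ t), hM t, (abs_nonneg _).trans (hB a)],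
      hasDerivWithinAt_const _ _ _⟩)
    hp (fun _ _ => ⟨le_rfl, hcB⟩) (fun t _ => hp_mem t) (hp_mem a).1 le_rfl hp_ab
  exact ⟨X, hX, hXab⟩

theorem stmt_6 (T : ℝ) (hT : 0 < T) (γ : ℝ → ℝ) (hγc : Continuous γ)
    (hγp : Function.Periodic γ T)
    (p : ℝ → ℝ) (hp : ContDiff ℝ 1 p) (hpper : Function.Periodic p T)
    (hineq : ∀ t, deriv p t ≥ p t ^ 2 + γ t) :
    ∃ φ : ℝ → ℝ, (∀ t, HasDerivAt φ (φ t ^ 2 + γ t) t) ∧ Function.Periodic φ T := by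
  obtain ⟨M, hM⟩ := isBounded_iff_forall_norm_le.1 (hγp.isBounded_of_continuous hT.ne' hγc)
  obtain ⟨B, hB⟩ :=
    isBounded_iff_forall_norm_le.1 (hpper.isBounded_of_continuous hT.ne' hp.continuous)
  simp only [forall_mem_range, Real.norm_eq_abs] at hM hB
  obtain ⟨X, hX, hX0T⟩ := exists_riccati_isIntegralCurveOn_Icc_eq hT.le hγc hM hB
    (fun t _ => ⟨deriv p t, hineq t,
      (hp.differentiable one_ne_zero t).hasDerivAt.hasDerivWithinAt⟩)
    (by simpa using (hpper 0).le)
  set φ := fun t => X (toIcoMod hT 0 t)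
  have hφ : Periodic φ T := fun t => by simp only [φ, toIcoMod_add_right]
  have hφX : EqOn φ X (Icc 0 T) := by
    simpa using eqOn_comp_toIcoMod hT (a := 0) (by simpa using hX0T.symm)
  refine ⟨φ, hφ.hasDerivAt_of_hasDerivWithinAt_Icc hT (φ' := fun t => φ t ^ 2 + γ t)
    (fun t => by simp only [hφ t, hγp t]) fun t ht => ?_, hφ⟩
  rw [hφX ht]
  exact (hX t ht).congr_of_mem hφX ht
end

section
/- Let γ: ℝ → ℝ be a continuous T-periodic function and let μ₁ < μ₂ be real numbers. Suppose that for i = 1, 2 the equation x' = x² + γ(t) + μᵢ has two distinct T-periodic solutions φᵢ⁻ and φᵢ⁺ with φᵢ⁻(t) < φᵢ⁺(t) for all t. Then φ₁⁻(t) < φ₂⁻(t) < φ₂⁺(t) < φ₁⁺(t) for all t ∈ ℝ. In particular, the initial value φ⁻(0,μ) of the lower (stable) T-periodic solution is strictly increasing in μ and the initial value φ⁺(0,μ) of the upper (unstable) T-periodic solution is strictly decreasing in μ. -/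
/-!
For two `T`-periodic solutions `x < y` of `x' = x² + γ + a` and `y' = y² + γ + b`, the difference
satisfies `(log (y - x))' = x + y + (b - a) / (y - x)`; integrating over a period gives
`∫ x + ∫ y = (a - b) ∫ (y - x)⁻¹`. With `a = b` this shows that the upper solution of one
equation has positive mean and the lower one negative mean.

For `a < b` the difference `w = y - x` solves `w' = (x + y) w + (b - a)`, so `w` times the
integrating factor `exp (-∫ (x + y))` is strictly increasing; hence a periodic `w` has no zero and
periodic solutions of different equations never cross. The identity then fixes the sign of
`∫ x + ∫ y`, which rules out the wrong orderings.
-/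

open intervalIntegral Real

lemma continuous_of_forall_hasDerivAt {f f' : ℝ → ℝ} (h : ∀ t, HasDerivAt f (f' t) t) :
    Continuous f :=
  continuous_iff_continuousAt.2 fun t => (h t).continuousAt

lemma Continuous.forall_neg_or_forall_pos {w : ℝ → ℝ} (hw : Continuous w) (h : ∀ t, w t ≠ 0) :
    (∀ t, w t < 0) ∨ ∀ t, 0 < w t := by
  by_contra! ⟨⟨s, hs⟩, ⟨r, hr⟩⟩
  obtain ⟨u, hu⟩ := intermediate_value_univ r s hw ⟨hr, hs⟩
  exact h u hu

lemma integral_inv_sub_pos {T : ℝ} (hT : 0 < T) {x y : ℝ → ℝ} (hx : Continuous x)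
    (hy : Continuous y) (hxy : ∀ t, x t < y t) : 0 < ∫ t in (0:ℝ)..T, (y t - x t)⁻¹ :=
  intervalIntegral_pos_of_pos
    (((hy.sub hx).inv₀ fun t => (sub_pos.2 (hxy t)).ne').intervalIntegrable 0 T)
    (fun t => inv_pos.2 (sub_pos.2 (hxy t))) hT

lemma strictMono_mul_exp_neg_integral {a w : ℝ → ℝ} {c : ℝ} (ha : Continuous a)
    (hw : ∀ t, HasDerivAt w (a t * w t + c) t) (hc : 0 < c) :
    StrictMono fun t => w t * exp (-∫ s in (0:ℝ)..t, a s) := by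
  refine strictMono_of_hasDerivAt_pos (f' := fun t => c * exp (-∫ s in (0:ℝ)..t, a s))
    (fun t => ?_) fun t => by positivity
  have hA := (ha.integral_hasStrictDerivAt 0 t).hasDerivAt
  exact ((hw t).mul hA.neg.exp).congr_deriv (by simp only [Pi.neg_apply]; ring)

lemma ne_zero_of_periodic_of_hasDerivAt {a w : ℝ → ℝ} {c T : ℝ} (hT : 0 < T)
    (ha : Continuous a) (hw : ∀ t, HasDerivAt w (a t * w t + c) t) (hc : 0 < c)
    (hwp : Function.Periodic w T) (t : ℝ) : w t ≠ 0 := by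
  intro h
  have := strictMono_mul_exp_neg_integral ha hw hc (lt_add_of_pos_right t hT)
  simp [hwp t, h] at this

lemma integral_eq_zero_of_periodic_of_hasDerivAt_mul {T : ℝ} {δ b : ℝ → ℝ} (hb : Continuous b)
    (hδ : ∀ t, 0 < δ t) (hδp : Function.Periodic δ T)
    (hd : ∀ t, HasDerivAt δ (b t * δ t) t) : ∫ t in (0:ℝ)..T, b t = 0 := by
  have hlog : ∀ t, HasDerivAt (fun s => log (δ s)) (b t) t := fun t =>
    ((hd t).log (hδ t).ne').congr_deriv (by field_simp [(hδ t).ne'])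
  rw [integral_eq_sub_of_hasDerivAt (fun t _ => hlog t) (hb.intervalIntegrable 0 T)]
  simp [show δ T = δ 0 by simpa using hδp 0]

section Riccati

variable {T a b : ℝ} {γ x y : ℝ → ℝ}

lemma riccati_lt_or_gt (hT : 0 < T) (hab : a < b)
    (hx : ∀ t, HasDerivAt x (x t ^ 2 + γ t + a) t) (hxp : Function.Periodic x T)
    (hy : ∀ t, HasDerivAt y (y t ^ 2 + γ t + b) t) (hyp : Function.Periodic y T) :
    (∀ t, y t < x t) ∨ ∀ t, x t < y t := by
  have hxc := continuous_of_forall_hasDerivAt hx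
  have hyc := continuous_of_forall_hasDerivAt hy
  have hw : ∀ t, HasDerivAt (y - x) ((x t + y t) * (y - x) t + (b - a)) t := fun t =>
    ((hy t).sub (hx t)).congr_deriv (by simp only [Pi.sub_apply]; ring)
  have hne := ne_zero_of_periodic_of_hasDerivAt hT (hxc.add hyc) hw (sub_pos.2 hab)
    (hyp.sub hxp)
  exact ((hyc.sub hxc).forall_neg_or_forall_pos hne).imp
    (fun h t => sub_neg.1 (h t)) fun h t => sub_pos.1 (h t)

lemma riccati_integral_add_integral
    (hx : ∀ t, HasDerivAt x (x t ^ 2 + γ t + a) t) (hxp : Function.Periodic x T)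
    (hy : ∀ t, HasDerivAt y (y t ^ 2 + γ t + b) t) (hyp : Function.Periodic y T)
    (hxy : ∀ t, x t < y t) :
    (∫ t in (0:ℝ)..T, x t) + ∫ t in (0:ℝ)..T, y t = (a - b) * ∫ t in (0:ℝ)..T, (y t - x t)⁻¹ := by
  have hxc := continuous_of_forall_hasDerivAt hx
  have hyc := continuous_of_forall_hasDerivAt hy
  have hδ : ∀ t, 0 < (y - x) t := fun t => sub_pos.2 (hxy t)
  have hsum : Continuous fun t => x t + y t := hxc.add hyc
  have hinv : Continuous fun t => (b - a) * (y t - x t)⁻¹ :=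
    continuous_const.mul ((hyc.sub hxc).inv₀ fun t => (hδ t).ne')
  have hδd : ∀ t, HasDerivAt (y - x) ((x t + y t + (b - a) * (y t - x t)⁻¹) * (y - x) t) t :=
    fun t => ((hy t).sub (hx t)).congr_deriv (by
      have := (hδ t).ne'
      simp only [Pi.sub_apply] at this ⊢
      field_simp
      ring)
  have hlog : ∫ t in (0:ℝ)..T, (x t + y t + (b - a) * (y t - x t)⁻¹) = 0 :=
    integral_eq_zero_of_periodic_of_hasDerivAt_mul (hsum.add hinv) hδ (hyp.sub hxp) hδd
  rw [integral_add (hsum.intervalIntegrable 0 T) (hinv.intervalIntegrable 0 T),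
    integral_add (hxc.intervalIntegrable 0 T) (hyc.intervalIntegrable 0 T),
    integral_const_mul] at hlog
  linarith

lemma riccati_integral_neg_and_pos (hT : 0 < T)
    (hx : ∀ t, HasDerivAt x (x t ^ 2 + γ t + a) t) (hxp : Function.Periodic x T)
    (hy : ∀ t, HasDerivAt y (y t ^ 2 + γ t + a) t) (hyp : Function.Periodic y T)
    (hxy : ∀ t, x t < y t) :
    (∫ t in (0:ℝ)..T, x t) < 0 ∧ 0 < ∫ t in (0:ℝ)..T, y t := by
  have hxc := continuous_of_forall_hasDerivAt hx
  have hyc := continuous_of_forall_hasDerivAt hy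
  have hsum := riccati_integral_add_integral hx hxp hy hyp hxy
  rw [sub_self, zero_mul] at hsum
  have hdiff : 0 < ∫ t in (0:ℝ)..T, (y t - x t) :=
    intervalIntegral_pos_of_pos ((hyc.sub hxc).intervalIntegrable 0 T)
      (fun t => sub_pos.2 (hxy t)) hT
  rw [integral_sub (hyc.intervalIntegrable 0 T) (hxc.intervalIntegrable 0 T)] at hdiff
  constructor <;> linarith

end Riccati

theorem stmt_8_general (T : ℝ) (hT : 0 < T) (γ : ℝ → ℝ)
    (μ₁ μ₂ : ℝ) (hμ : μ₁ < μ₂)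
    (φ₁m φ₁p φ₂m φ₂p : ℝ → ℝ)
    (h1md : ∀ t, HasDerivAt φ₁m (φ₁m t ^ 2 + γ t + μ₁) t) (h1mp : Function.Periodic φ₁m T)
    (h1pd : ∀ t, HasDerivAt φ₁p (φ₁p t ^ 2 + γ t + μ₁) t) (h1pp : Function.Periodic φ₁p T)
    (h2md : ∀ t, HasDerivAt φ₂m (φ₂m t ^ 2 + γ t + μ₂) t) (h2mp : Function.Periodic φ₂m T)
    (h2pd : ∀ t, HasDerivAt φ₂p (φ₂p t ^ 2 + γ t + μ₂) t) (h2pp : Function.Periodic φ₂p T)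
    (horder1 : ∀ t, φ₁m t < φ₁p t) (horder2 : ∀ t, φ₂m t < φ₂p t) :
    (∀ t, φ₁m t < φ₂m t ∧ φ₂m t < φ₂p t ∧ φ₂p t < φ₁p t) ∧
    -- in particular, the initial value of the lower solution strictly increases with μ
    φ₁m 0 < φ₂m 0 ∧
    -- and the initial value of the upper solution strictly decreases with μ
    φ₂p 0 < φ₁p 0 := by
  obtain ⟨h1m, h1p⟩ := riccati_integral_neg_and_pos hT h1md h1mp h1pd h1pp horder1
  obtain ⟨h2m, h2p⟩ := riccati_integral_neg_and_pos hT h2md h2mp h2pd h2pp horder2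
  have hlower : ∀ t, φ₁m t < φ₂m t := by
    refine (riccati_lt_or_gt hT hμ h1md h1mp h2md h2mp).resolve_left fun h => ?_
    have hsum := riccati_integral_add_integral h2md h2mp h1md h1mp h
    have hI := integral_inv_sub_pos hT (continuous_of_forall_hasDerivAt h2md)
      (continuous_of_forall_hasDerivAt h1md) h
    nlinarith
  have hupper : ∀ t, φ₂p t < φ₁p t := by
    refine (riccati_lt_or_gt hT hμ h1pd h1pp h2pd h2pp).resolve_right fun h => ?_
    have hsum := riccati_integral_add_integral h1pd h1pp h2pd h2pp h
    have hI := integral_inv_sub_pos hT (continuous_of_forall_hasDerivAt h1pd)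
      (continuous_of_forall_hasDerivAt h2pd) h
    nlinarith
  exact ⟨fun t => ⟨hlower t, horder2 t, hupper t⟩, hlower 0, hupper 0⟩

theorem stmt_8 (T : ℝ) (hT : 0 < T) (γ : ℝ → ℝ) (hγc : Continuous γ)
    (hγp : Function.Periodic γ T)
    (μ₁ μ₂ : ℝ) (hμ : μ₁ < μ₂)
    (φ₁m φ₁p φ₂m φ₂p : ℝ → ℝ)
    (h1md : ∀ t, HasDerivAt φ₁m (φ₁m t ^ 2 + γ t + μ₁) t) (h1mp : Function.Periodic φ₁m T)
    (h1pd : ∀ t, HasDerivAt φ₁p (φ₁p t ^ 2 + γ t + μ₁) t) (h1pp : Function.Periodic φ₁p T)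
    (h2md : ∀ t, HasDerivAt φ₂m (φ₂m t ^ 2 + γ t + μ₂) t) (h2mp : Function.Periodic φ₂m T)
    (h2pd : ∀ t, HasDerivAt φ₂p (φ₂p t ^ 2 + γ t + μ₂) t) (h2pp : Function.Periodic φ₂p T)
    (horder1 : ∀ t, φ₁m t < φ₁p t) (horder2 : ∀ t, φ₂m t < φ₂p t) :
    (∀ t, φ₁m t < φ₂m t ∧ φ₂m t < φ₂p t ∧ φ₂p t < φ₁p t) ∧
    -- in particular, the initial value of the lower solution strictly increases with μ
    φ₁m 0 < φ₂m 0 ∧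
    -- and the initial value of the upper solution strictly decreases with μ
    φ₂p 0 < φ₁p 0 :=
  stmt_8_general T hT γ μ₁ μ₂ hμ φ₁m φ₁p φ₂m φ₂p h1md h1mp h1pd h1pp h2md h2mp h2pd h2pp horder1
    horder2
end

section
/- Let γ: ℝ → ℝ be a continuous T-periodic function with zero average, let q ∈ C¹_{T,0}(ℝ), and set μ := (∫₀ᵀ e^{−2∫₀ᵗ q(s) ds} dt)⁻¹ · ∫₀ᵀ e^{−2∫₀ᵗ q(s) ds} (q(t)² − γ(t)) dt. Then the equation x' = x² + γ(t) + μ has at most one T-periodic solution; moreover, if it has a T-periodic solution φ, then φ = q, and in particular φ has zero average. -/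
/-!
Let `w(t) = exp (-2 ∫₀ᵗ q)`, so that `w' = -2 q w`. For a solution `φ` of `φ' = φ² + γ + μ`,
`(w φ)' = w ((φ - q)² - (q² - γ - μ))`, and `w φ` takes the same value at `0` and `T` because
`q` has zero average. Integrating over a period gives `∫₀ᵀ w (φ - q)² = ∫₀ᵀ w (q² - γ - μ)`,
and `μ` is precisely the weighted average that makes the right-hand side vanish. Since `w > 0`,
`φ = q` on `[0, T]`, hence everywhere by periodicity.
-/

open intervalIntegral MeasureTheory Set

theorem Function.Periodic.eq_of_eqOn_Ico {α β : Type*} [AddCommGroup α] [LinearOrder α]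
    [IsOrderedAddMonoid α] [Archimedean α] {f g : α → β} {c : α} (hf : Function.Periodic f c)
    (hg : Function.Periodic g c) (hc : 0 < c) (h : EqOn f g (Ico 0 c)) : f = g := by
  funext x
  obtain ⟨n, hn, -⟩ := existsUnique_zsmul_near_of_pos' hc x
  rw [← hf.sub_zsmul_eq n, ← hg.sub_zsmul_eq n, h hn]

theorem eqOn_zero_of_integral_eq_zero {f : ℝ → ℝ} {a b : ℝ} (hab : a < b) (hf : Continuous f)
    (hf_nonneg : ∀ t, 0 ≤ f t) (hf_int : ∫ t in a..b, f t = 0) : EqOn f 0 (Icc a b) := by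
  have hae : f =ᵐ[volume.restrict (Icc a b)] 0 := by
    rw [← Measure.restrict_congr_set Ioc_ae_eq_Icc]
    exact (integral_eq_zero_iff_of_le_of_nonneg_ae hab.le (.of_forall hf_nonneg)
      (hf.intervalIntegrable a b)).1 hf_int
  refine Measure.eqOn_of_ae_eq hae hf.continuousOn continuousOn_const ?_
  rw [interior_Icc, closure_Ioo hab.ne]

noncomputable def riccatiWeight (q : ℝ → ℝ) (t : ℝ) : ℝ := Real.exp (-2 * ∫ s in (0:ℝ)..t, q s)

section riccatiWeight

variable {q : ℝ → ℝ}

theorem riccatiWeight_pos (q : ℝ → ℝ) (t : ℝ) : 0 < riccatiWeight q t := Real.exp_pos _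

@[simp]
theorem riccatiWeight_zero (q : ℝ → ℝ) : riccatiWeight q 0 = 1 := by simp [riccatiWeight]

theorem riccatiWeight_eq_one_of_integral_eq_zero {T : ℝ} (hq0 : ∫ t in (0:ℝ)..T, q t = 0) :
    riccatiWeight q T = 1 := by
  simp [riccatiWeight, hq0]

theorem hasDerivAt_riccatiWeight (hq : Continuous q) (t : ℝ) :
    HasDerivAt (riccatiWeight q) (-2 * q t * riccatiWeight q t) t := by
  have hQ : HasDerivAt (fun u => ∫ s in (0:ℝ)..u, q s) (q t) t :=
    integral_hasDerivAt_right (hq.intervalIntegrable 0 t) (hq.stronglyMeasurableAtFilter _ _)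
      hq.continuousAt
  exact (hQ.const_mul (-2)).exp.congr_deriv (by rw [riccatiWeight]; ring)

theorem continuous_riccatiWeight (hq : Continuous q) : Continuous (riccatiWeight q) :=
  continuous_iff_continuousAt.2 fun t => (hasDerivAt_riccatiWeight hq t).continuousAt

theorem integral_riccatiWeight_mul_sub_sq {p φ : ℝ → ℝ} {T : ℝ} (hp : Continuous p)
    (hq : Continuous q) (hq0 : ∫ t in (0:ℝ)..T, q t = 0)
    (hφ : ∀ t, HasDerivAt φ (φ t ^ 2 + p t) t) (hφT : φ T = φ 0) :
    ∫ t in (0:ℝ)..T, riccatiWeight q t * (φ t - q t) ^ 2 =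
      ∫ t in (0:ℝ)..T, riccatiWeight q t * (q t ^ 2 - p t) := by
  have hφc : Continuous φ := continuous_iff_continuousAt.2 fun t => (hφ t).continuousAt
  have hw := continuous_riccatiWeight hq
  have hderiv : ∀ t, HasDerivAt (fun t => riccatiWeight q t * φ t)
      (riccatiWeight q t * (φ t - q t) ^ 2 - riccatiWeight q t * (q t ^ 2 - p t)) t := fun t =>
    ((hasDerivAt_riccatiWeight hq t).fun_mul (hφ t)).congr_deriv (by ring)
  have hFTC : ∫ t in (0:ℝ)..T,
      (riccatiWeight q t * (φ t - q t) ^ 2 - riccatiWeight q t * (q t ^ 2 - p t)) = 0 := by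
    rw [integral_eq_sub_of_hasDerivAt (fun t _ => hderiv t)
      (Continuous.intervalIntegrable (by fun_prop) 0 T),
      riccatiWeight_eq_one_of_integral_eq_zero hq0, riccatiWeight_zero, hφT, sub_self]
  rw [integral_sub (Continuous.intervalIntegrable (by fun_prop) 0 T)
    (Continuous.intervalIntegrable (by fun_prop) 0 T)] at hFTC
  exact sub_eq_zero.1 hFTC

theorem integral_riccatiWeight_mul_sub_eq_zero {γ : ℝ → ℝ} {T μ : ℝ} (hT : 0 < T)
    (hq : Continuous q) (hγ : Continuous γ)
    (hμ : μ = (∫ t in (0:ℝ)..T, riccatiWeight q t)⁻¹ *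
      ∫ t in (0:ℝ)..T, riccatiWeight q t * (q t ^ 2 - γ t)) :
    ∫ t in (0:ℝ)..T, riccatiWeight q t * (q t ^ 2 - (γ t + μ)) = 0 := by
  have hw := continuous_riccatiWeight hq
  have hW : 0 < ∫ t in (0:ℝ)..T, riccatiWeight q t :=
    intervalIntegral_pos_of_pos (hw.intervalIntegrable 0 T) (riccatiWeight_pos q) hT
  calc ∫ t in (0:ℝ)..T, riccatiWeight q t * (q t ^ 2 - (γ t + μ))
      = (∫ t in (0:ℝ)..T, riccatiWeight q t * (q t ^ 2 - γ t)) -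
          μ * ∫ t in (0:ℝ)..T, riccatiWeight q t := by
        rw [← intervalIntegral.integral_const_mul,
          ← integral_sub (Continuous.intervalIntegrable (by fun_prop) 0 T)
            (Continuous.intervalIntegrable (by fun_prop) 0 T)]
        congr 1 with t
        ring
    _ = 0 := by
        rw [hμ, mul_right_comm, inv_mul_cancel₀ hW.ne', one_mul, sub_self]

end riccatiWeight

theorem stmt_9_general (T : ℝ) (hT : 0 < T) (γ : ℝ → ℝ) (hγc : Continuous γ)
    (q : ℝ → ℝ) (hq : ContDiff ℝ 1 q) (hqper : Function.Periodic q T)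
    (hq0 : (∫ t in (0:ℝ)..T, q t) = 0)
    (μ : ℝ)
    (hμ : μ = (∫ t in (0:ℝ)..T, Real.exp (-2 * ∫ s in (0:ℝ)..t, q s))⁻¹ *
      ∫ t in (0:ℝ)..T, Real.exp (-2 * ∫ s in (0:ℝ)..t, q s) * (q t ^ 2 - γ t)) :
    -- at most one T-periodic solution
    (∀ φ ψ : ℝ → ℝ,
      (∀ t, HasDerivAt φ (φ t ^ 2 + γ t + μ) t) → Function.Periodic φ T →
      (∀ t, HasDerivAt ψ (ψ t ^ 2 + γ t + μ) t) → Function.Periodic ψ T → φ = ψ) ∧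
    -- any T-periodic solution equals q, and in particular has zero average
    (∀ φ : ℝ → ℝ,
      (∀ t, HasDerivAt φ (φ t ^ 2 + γ t + μ) t) → Function.Periodic φ T →
      φ = q ∧ (∫ t in (0:ℝ)..T, φ t) = 0) := by
  have hqc := hq.continuous
  have eq_q : ∀ φ : ℝ → ℝ, (∀ t, HasDerivAt φ (φ t ^ 2 + γ t + μ) t) →
      Function.Periodic φ T → φ = q := by
    intro φ hφ hφper
    have hφc : Continuous φ := continuous_iff_continuousAt.2 fun t => (hφ t).continuousAt
    have hdist : ∫ t in (0:ℝ)..T, riccatiWeight q t * (φ t - q t) ^ 2 = 0 :=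
      (integral_riccatiWeight_mul_sub_sq (hγc.add continuous_const) hqc hq0
        (fun t => (hφ t).congr_deriv (add_assoc _ _ _)) (by simpa using hφper 0)).trans
      (integral_riccatiWeight_mul_sub_eq_zero hT hqc hγc hμ)
    have hzero := eqOn_zero_of_integral_eq_zero hT
      (by have := continuous_riccatiWeight hqc; fun_prop)
      (fun t => mul_nonneg (riccatiWeight_pos q t).le (sq_nonneg _)) hdist
    refine hφper.eq_of_eqOn_Ico hqper hT fun t ht => ?_
    simpa [(riccatiWeight_pos q t).ne', sub_eq_zero] using hzero (Ico_subset_Icc_self ht)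
  exact ⟨fun φ ψ hφ hφper hψ hψper => (eq_q φ hφ hφper).trans (eq_q ψ hψ hψper).symm,
    fun φ hφ hφper => ⟨eq_q φ hφ hφper, (eq_q φ hφ hφper) ▸ hq0⟩⟩

theorem stmt_9 (T : ℝ) (hT : 0 < T) (γ : ℝ → ℝ) (hγc : Continuous γ)
    (hγp : Function.Periodic γ T) (hγ0 : (∫ t in (0:ℝ)..T, γ t) = 0)
    (q : ℝ → ℝ) (hq : ContDiff ℝ 1 q) (hqper : Function.Periodic q T)
    (hq0 : (∫ t in (0:ℝ)..T, q t) = 0)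
    (μ : ℝ)
    (hμ : μ = (∫ t in (0:ℝ)..T, Real.exp (-2 * ∫ s in (0:ℝ)..t, q s))⁻¹ *
      ∫ t in (0:ℝ)..T, Real.exp (-2 * ∫ s in (0:ℝ)..t, q s) * (q t ^ 2 - γ t)) :
    -- at most one T-periodic solution
    (∀ φ ψ : ℝ → ℝ,
      (∀ t, HasDerivAt φ (φ t ^ 2 + γ t + μ) t) → Function.Periodic φ T →
      (∀ t, HasDerivAt ψ (ψ t ^ 2 + γ t + μ) t) → Function.Periodic ψ T → φ = ψ) ∧
    -- any T-periodic solution equals q, and in particular has zero average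
    (∀ φ : ℝ → ℝ,
      (∀ t, HasDerivAt φ (φ t ^ 2 + γ t + μ) t) → Function.Periodic φ T →
      φ = q ∧ (∫ t in (0:ℝ)..T, φ t) = 0) :=
  stmt_9_general T hT γ hγc q hq hqper hq0 μ hμ
end

section
/- Let T > 0, let α: ℝ → ℝ be a continuous T-periodic function with zero average, and let (αₙ) be continuous T-periodic functions with zero average converging uniformly to α. Suppose for each n there exist μₙ ∈ ℝ and a continuously differentiable T-periodic function pₙ with zero average such that pₙ'(t) = pₙ(t)² + αₙ(t) + μₙ for all t, and suppose pₙ converges uniformly to a function p*. Then: μₙ = −(1/T)∫₀ᵀ pₙ(t)² dt for every n; μₙ converges to μ̃ := −(1/T)∫₀ᵀ p*(t)² dt; p* is continuously differentiable, T-periodic, has zero average, and satisfies p*'(t) = p*(t)² + α(t) + μ̃ for all t. -/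
/-!
Integrating `pₙ' = pₙ² + αₙ + μₙ` over a period kills `pₙ'` (periodicity) and `αₙ` (zero
average), which leaves `∫₀ᵀ pₙ² + T μₙ = 0`. Uniform convergence `pₙ → p*` gives locally uniform
convergence `pₙ² → p*²`, so the integrals, hence `μₙ`, converge, and so do the derivatives `pₙ'`;
the theorem on uniform limits of derivatives then shows that `p*` solves the limit equation.
-/

open Filter Topology Function MeasureTheory

theorem Function.Periodic.of_tendsto {ι α β : Type*} [Add α] [TopologicalSpace β] [T2Space β]
    {l : Filter ι} [l.NeBot] {F : ι → α → β} {f : α → β} {c : α}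
    (hF : ∀ i, Periodic (F i) c) (h : ∀ x, Tendsto (fun i => F i x) l (𝓝 (f x))) :
    Periodic f c := fun x =>
  tendsto_nhds_unique ((h (x + c)).congr fun i => hF i x) (h x)

theorem TendstoLocallyUniformly.sq {ι X R : Type*} [TopologicalSpace X] [NormedRing R]
    {l : Filter ι} {F : ι → X → R} {f : X → R} (h : TendstoLocallyUniformly F f l)
    (hf : Continuous f) :
    TendstoLocallyUniformly (fun i x => F i x ^ 2) (fun x => f x ^ 2) l := by
  simp only [pow_two]
  exact h.fun_mul₀ h hf hf

theorem TendstoLocallyUniformly.tendsto_intervalIntegral {ι E : Type*} [NormedAddCommGroup E]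
    [NormedSpace ℝ E] {l : Filter ι} [l.IsCountablyGenerated] {F : ι → ℝ → E} {f : ℝ → E}
    (h : TendstoLocallyUniformly F f l) (hF : ∀ i, Continuous (F i)) (a b : ℝ) :
    Tendsto (fun i => ∫ x in a..b, F i x) l (𝓝 (∫ x in a..b, f x)) :=
  TendstoUniformlyOn.tendsto_intervalIntegral_of_continuousOn
    (.of_forall fun i => (hF i).continuousOn)
    (tendstoLocallyUniformly_iff_forall_isCompact.mp h _ isCompact_uIcc)

theorem Function.Periodic.intervalIntegral_deriv_eq_zero_s16 {E : Type*} [NormedAddCommGroup E]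
    [NormedSpace ℝ E] [CompleteSpace E] {f f' : ℝ → E} {T : ℝ} (hf : Periodic f T)
    (hderiv : ∀ t, HasDerivAt f (f' t) t) (hint : IntervalIntegrable f' volume 0 T) :
    ∫ t in (0 : ℝ)..T, f' t = 0 := by
  rw [intervalIntegral.integral_eq_sub_of_hasDerivAt (fun t _ => hderiv t) hint,
    sub_eq_zero]
  simpa using hf 0

theorem Function.Periodic.riccati_const_eq_neg_mean_sq {p a : ℝ → ℝ} {μ T : ℝ} (hT : T ≠ 0)
    (hp : Periodic p T) (hderiv : ∀ t, HasDerivAt p (p t ^ 2 + a t + μ) t) (ha : Continuous a)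
    (ha0 : ∫ t in (0 : ℝ)..T, a t = 0) :
    μ = -(1 / T) * ∫ t in (0 : ℝ)..T, p t ^ 2 := by
  have hpc : Continuous p := continuous_iff_continuousAt.2 fun t => (hderiv t).continuousAt
  have hsq : IntervalIntegrable (fun t => p t ^ 2) volume 0 T :=
    (hpc.pow 2).intervalIntegrable 0 T
  have h := hp.intervalIntegral_deriv_eq_zero_s16 hderiv
    ((by fun_prop : Continuous fun t => p t ^ 2 + a t + μ).intervalIntegrable 0 T)
  have ha' : IntervalIntegrable a volume 0 T := ha.intervalIntegrable 0 T
  rw [intervalIntegral.integral_add (hsq.add ha') intervalIntegrable_const,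
    intervalIntegral.integral_add hsq ha', ha0,
    intervalIntegral.integral_const, smul_eq_mul, sub_zero] at h
  field_simp
  linarith

theorem stmt_16_general (T : ℝ) (hT : 0 < T)
    (α : ℝ → ℝ) (hαc : Continuous α)
    (αn : ℕ → ℝ → ℝ) (hαnc : ∀ n, Continuous (αn n))
    (hαn0 : ∀ n, (∫ t in (0:ℝ)..T, αn n t) = 0)
    (hαconv : TendstoUniformly αn α Filter.atTop)
    (μn : ℕ → ℝ) (pn : ℕ → ℝ → ℝ)
    (hpnd : ∀ n t, HasDerivAt (pn n) (pn n t ^ 2 + αn n t + μn n) t)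
    (hpnp : ∀ n, Function.Periodic (pn n) T)
    (hpn0 : ∀ n, (∫ t in (0:ℝ)..T, pn n t) = 0)
    (ps : ℝ → ℝ) (hpconv : TendstoUniformly pn ps Filter.atTop) :
    -- μₙ = −(1/T)∫₀ᵀ pₙ²
    (∀ n, μn n = -(1 / T) * ∫ t in (0:ℝ)..T, pn n t ^ 2) ∧
    -- μₙ → μ̃ = −(1/T)∫₀ᵀ (p*)²
    Filter.Tendsto μn Filter.atTop (nhds (-(1 / T) * ∫ t in (0:ℝ)..T, ps t ^ 2)) ∧
    -- p* is continuously differentiable, T-periodic, has zero average,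
    -- and solves x' = x² + α(t) + μ̃
    ContDiff ℝ 1 ps ∧ Function.Periodic ps T ∧ (∫ t in (0:ℝ)..T, ps t) = 0 ∧
    (∀ t, HasDerivAt ps (ps t ^ 2 + α t + (-(1 / T) * ∫ s in (0:ℝ)..T, ps s ^ 2)) t) := by
  have hpnc : ∀ n, Continuous (pn n) := fun n =>
    continuous_iff_continuousAt.2 fun t => (hpnd n t).continuousAt
  have hpsc : Continuous ps := hpconv.continuous (.of_forall hpnc)
  have hp := hpconv.tendstoLocallyUniformly
  have hμ : ∀ n, μn n = -(1 / T) * ∫ t in (0:ℝ)..T, pn n t ^ 2 := fun n =>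
    (hpnp n).riccati_const_eq_neg_mean_sq hT.ne' (hpnd n) (hαnc n) (hαn0 n)
  have hμlim : Tendsto μn atTop (𝓝 (-(1 / T) * ∫ t in (0:ℝ)..T, ps t ^ 2)) := by
    rw [funext hμ]
    exact ((hp.sq hpsc).tendsto_intervalIntegral (fun n => (hpnc n).pow 2) 0 T).const_mul _
  have hps0 : ∫ t in (0:ℝ)..T, ps t = 0 :=
    tendsto_nhds_unique (hp.tendsto_intervalIntegral hpnc 0 T)
      (by simp only [hpn0, tendsto_const_nhds])
  have hder : ∀ t, HasDerivAt ps (ps t ^ 2 + α t + (-(1 / T) * ∫ s in (0:ℝ)..T, ps s ^ 2)) t :=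
    fun t => hasDerivAt_of_tendstoLocallyUniformlyOn isOpen_univ
      (((hp.sq hpsc).add hαconv.tendstoLocallyUniformly).add
        hμlim.tendstoUniformly_const.tendstoLocallyUniformly).tendstoLocallyUniformlyOn
      (.of_forall fun n t _ => hpnd n t) (fun t _ => hpconv.tendsto_at t) (Set.mem_univ t)
  refine ⟨hμ, hμlim, ?_, .of_tendsto hpnp hpconv.tendsto_at, hps0, hder⟩
  refine contDiff_one_iff_deriv.2 ⟨fun t => (hder t).differentiableAt, ?_⟩
  rw [funext fun t => (hder t).deriv]
  fun_prop

theorem stmt_16 (T : ℝ) (hT : 0 < T)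
    (α : ℝ → ℝ) (hαc : Continuous α) (hαp : Function.Periodic α T)
    (hα0 : (∫ t in (0:ℝ)..T, α t) = 0)
    (αn : ℕ → ℝ → ℝ) (hαnc : ∀ n, Continuous (αn n))
    (hαnp : ∀ n, Function.Periodic (αn n) T)
    (hαn0 : ∀ n, (∫ t in (0:ℝ)..T, αn n t) = 0)
    (hαconv : TendstoUniformly αn α Filter.atTop)
    (μn : ℕ → ℝ) (pn : ℕ → ℝ → ℝ)
    (hpnd : ∀ n t, HasDerivAt (pn n) (pn n t ^ 2 + αn n t + μn n) t)
    (hpnp : ∀ n, Function.Periodic (pn n) T)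
    (hpn0 : ∀ n, (∫ t in (0:ℝ)..T, pn n t) = 0)
    (ps : ℝ → ℝ) (hpconv : TendstoUniformly pn ps Filter.atTop) :
    -- μₙ = −(1/T)∫₀ᵀ pₙ²
    (∀ n, μn n = -(1 / T) * ∫ t in (0:ℝ)..T, pn n t ^ 2) ∧
    -- μₙ → μ̃ = −(1/T)∫₀ᵀ (p*)²
    Filter.Tendsto μn Filter.atTop (nhds (-(1 / T) * ∫ t in (0:ℝ)..T, ps t ^ 2)) ∧
    -- p* is continuously differentiable, T-periodic, has zero average,
    -- and solves x' = x² + α(t) + μ̃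
    ContDiff ℝ 1 ps ∧ Function.Periodic ps T ∧ (∫ t in (0:ℝ)..T, ps t) = 0 ∧
    (∀ t, HasDerivAt ps (ps t ^ 2 + α t + (-(1 / T) * ∫ s in (0:ℝ)..T, ps s ^ 2)) t) :=
  stmt_16_general T hT α hαc αn hαnc hαn0 hαconv μn pn hpnd hpnp hpn0 ps hpconv
end

section
/- Let v: ℝ → ℝ be a continuously differentiable T-periodic function and consider the Riccati equation x' = (v(t) − v'(t))x² − x. Then: (i) x ≡ 0 is a T-periodic solution and ∫₀ᵀ (2(v(t) − v'(t))·0 − 1) dt = −T < 0, so it is hyperbolic and attractive; (ii) if v(t) ≠ 0 for all t ∈ ℝ, then φ(t) := 1/v(t) is a T-periodic solution and ∫₀ᵀ (2(v(t) − v'(t))φ(t) − 1) dt = T > 0, so it is hyperbolic and repulsive; (iii) for every k ∈ ℝ and every t in an interval on which v(t) + k·eᵗ ≠ 0, the function x(t) = 1/(v(t) + k·eᵗ) satisfies x'(t) = (v(t) − v'(t))x(t)² − x(t); (iv) if v(t₀) = 0 for some t₀ ∈ ℝ, then there exists t₁ ∈ ℝ with v(t₁) − v'(t₁) = 0, i.e.,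 the leading coefficient of the equation vanishes somewhere. -/
/-! For any nonvanishing differentiable `g`, `1 / g` solves `x' = (g - g') x² - x`; taking
`g = v + k eᵗ` leaves `g - g' = v - v'` unchanged, which gives (ii) and (iii). The integral in (ii)
is `T - 2 ∫ v'/v`, and `∫₀ᵀ v'/v = log v(T) - log v(0) = 0` by periodicity. For (iv), Rolle's
theorem on `[t₀, t₀ + T]` yields a zero of `(e⁻ᵗ v)' = e⁻ᵗ (v' - v)`. -/

open Real Set

theorem HasDerivAt.one_div_riccati {g : ℝ → ℝ} {g' t : ℝ} (hg : HasDerivAt g g' t)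
    (h : g t ≠ 0) :
    HasDerivAt (fun s => 1 / g s) ((g t - g') * (1 / g t) ^ 2 - 1 / g t) t := by
  refine ((hasDerivAt_const t (1 : ℝ)).fun_div hg h).congr_deriv ?_
  field_simp
  ring

theorem integral_deriv_div_eq_zero_of_periodic {v : ℝ → ℝ} {T : ℝ} (hv : ContDiff ℝ 1 v)
    (hvp : Function.Periodic v T) (hne : ∀ t, v t ≠ 0) :
    ∫ t in (0 : ℝ)..T, deriv v t / v t = 0 := by
  have hlog : ∀ t, HasDerivAt (fun s => log (v s)) (deriv v t / v t) t := fun t =>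
    ((hv.differentiable one_ne_zero t).hasDerivAt).log (hne t)
  have hcont : Continuous (fun t => deriv v t / v t) :=
    (hv.continuous_deriv le_rfl).div hv.continuous hne
  rw [intervalIntegral.integral_eq_sub_of_hasDerivAt (fun t _ => hlog t)
    (hcont.intervalIntegrable 0 T), hvp.eq, sub_self]

theorem exists_deriv_eq_self_of_eq_zero {v : ℝ → ℝ} {a b : ℝ} (hab : a < b)
    (hvc : ContinuousOn v (Icc a b)) (hvd : DifferentiableOn ℝ v (Ioo a b))
    (ha : v a = 0) (hb : v b = 0) : ∃ c ∈ Ioo a b, deriv v c = v c := by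
  have hgd : ∀ s ∈ Ioo a b,
      HasDerivAt (fun s => exp (-s) * v s) (exp (-s) * (deriv v s - v s)) s := by
    intro s hs
    have hexp : HasDerivAt (fun s => exp (-s)) (-exp (-s)) s := by
      simpa using (hasDerivAt_neg s).exp
    have hvs := (hvd.differentiableAt (isOpen_Ioo.mem_nhds hs)).hasDerivAt
    exact (hexp.fun_mul hvs).congr_deriv (by ring)
  obtain ⟨c, hc, hc0⟩ := exists_hasDerivAt_eq_zero hab
    ((continuous_neg.rexp.continuousOn).mul hvc) (by simp [ha, hb]) hgd
  exact ⟨c, hc, sub_eq_zero.mp ((mul_eq_zero.mp hc0).resolve_left (exp_ne_zero _))⟩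

theorem stmt_19 (T : ℝ) (hT : 0 < T) (v : ℝ → ℝ) (hv : ContDiff ℝ 1 v)
    (hvp : Function.Periodic v T) :
    -- (i) x ≡ 0 is a T-periodic solution, hyperbolic and attractive
    ((∀ t, HasDerivAt (fun _ : ℝ => (0:ℝ)) ((v t - deriv v t) * 0 ^ 2 - 0) t) ∧
      Function.Periodic (fun _ : ℝ => (0:ℝ)) T ∧
      (∫ t in (0:ℝ)..T, (2 * (v t - deriv v t) * 0 - 1)) = -T ∧ -T < 0) ∧
    -- (ii) if v never vanishes, φ = 1/v is a T-periodic solution, hyperbolic and repulsive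
    ((∀ t, v t ≠ 0) →
      (∀ t, HasDerivAt (fun s => 1 / v s) ((v t - deriv v t) * (1 / v t) ^ 2 - 1 / v t) t) ∧
      Function.Periodic (fun s => 1 / v s) T ∧
      (∫ t in (0:ℝ)..T, (2 * (v t - deriv v t) * (1 / v t) - 1)) = T ∧ 0 < T) ∧
    -- (iii) x = 1/(v + k eᵗ) solves the equation wherever v + k eᵗ ≠ 0
    (∀ k t : ℝ, v t + k * Real.exp t ≠ 0 →
      HasDerivAt (fun s => 1 / (v s + k * Real.exp s))
        ((v t - deriv v t) * (1 / (v t + k * Real.exp t)) ^ 2 -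
          1 / (v t + k * Real.exp t)) t) ∧
    -- (iv) if v vanishes somewhere, then so does the leading coefficient v − v'
    (∀ t₀ : ℝ, v t₀ = 0 → ∃ t₁ : ℝ, v t₁ - deriv v t₁ = 0) := by
  have hvd : ∀ t, HasDerivAt v (deriv v t) t := fun t =>
    (hv.differentiable one_ne_zero t).hasDerivAt
  refine ⟨⟨fun t => by simpa using hasDerivAt_const t (0 : ℝ), fun _ => rfl, by simp,
    by linarith⟩, fun hne => ⟨fun t => (hvd t).one_div_riccati (hne t),
    fun t => by simp [hvp t], ?_, hT⟩, fun k t hne => ?_, fun t₀ ht₀ => ?_⟩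
  · have hint : ∀ t, 2 * (v t - deriv v t) * (1 / v t) - 1 = 1 - 2 * (deriv v t / v t) :=
      fun t => by field_simp [hne t]; ring
    have hcont : Continuous (fun t => deriv v t / v t) :=
      (hv.continuous_deriv le_rfl).div hv.continuous hne
    simp only [hint]
    rw [intervalIntegral.integral_sub intervalIntegrable_const
      ((hcont.intervalIntegrable 0 T).const_mul 2), intervalIntegral.integral_const_mul,
      integral_deriv_div_eq_zero_of_periodic hv hvp hne]
    simp
  · have hg := (hvd t).add ((hasDerivAt_exp t).const_mul k)
    simpa using hg.one_div_riccati hne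
  · obtain ⟨c, -, hc⟩ := exists_deriv_eq_self_of_eq_zero (lt_add_of_pos_right t₀ hT)
      hv.continuous.continuousOn (hv.differentiable one_ne_zero).differentiableOn ht₀
      (by rw [hvp t₀, ht₀])
    exact ⟨c, sub_eq_zero.mpr hc.symm⟩
end
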